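/- Let G be a finite group of order 2ⁿ (n ≥ 1). The power graph of G has a perfect matching if and only if G is cyclic or generalized quaternion. -/

import Mathlib

/-!
A perfect matching of a graph amounts to a fixed-point-free involution `f` with every `x` adjacent
to `f x`. If `z` is the only involution of `G`, pair `1` with `z` and every other `x` with `x⁻¹`.
Conversely, let `G` be a `2`-group and `c` an involution. The nonidentity `x` with `c ∈ ⟨x⟩` form a
set of odd size (inversion pairs it up, except for `c`) from which the only edges leaving it go to
`1`, so a perfect matching pairs `1` with one of its elements. Hence every involution lies in the
cyclic group generated by the partner of `1`, and there is only one.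

A `2`-group with a unique involution `z` is cyclic or generalized quaternion. A maximal abelian
normal subgroup `A` is self-centralizing and, being abelian with one involution, cyclic: `A = ⟨a⟩`.
If `A ≠ G`, a `2`-adic computation with `x a x⁻¹ = a ^ r` and `x² = a ^ t` shows that every
`x ∉ A` with `x² ∈ A` inverts `a` and squares to `z`. As no automorphism of `⟨a⟩` squares to
inversion, all squares lie in `A`, so `[G : A] = 2` and `G` has the quaternion presentation.
-/

open SimpleGraph

def powerGraph (G : Type*) [Group G] : SimpleGraph G where
  Adj x y := x ≠ y ∧ ((∃ n : ℕ, y ^ n = x) ∨ (∃ n : ℕ, x ^ n = y))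
  symm := ⟨fun x y ⟨h, hp⟩ => ⟨h.symm, hp.symm⟩⟩
  loopless := ⟨fun x ⟨h, _⟩ => h rfl⟩

noncomputable def matchingNumber {V : Type*} (Γ : SimpleGraph V) : ℕ :=
  sSup {n | ∃ M : Γ.Subgraph, M.IsMatching ∧ M.edgeSet.ncard = n}

def hasPerfectMatching {V : Type*} (Γ : SimpleGraph V) : Prop :=
  ∃ M : Γ.Subgraph, M.IsPerfectMatching

section

open Subgroup

namespace SimpleGraph

variable {V : Type*} {Γ : SimpleGraph V}

theorem exists_isMatching_of_involutive_on {s : Set V} (f : V → V) (hmaps : Set.MapsTo f s s)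
    (hinv : ∀ v ∈ s, f (f v) = v) (hadj : ∀ v ∈ s, Γ.Adj v (f v)) :
    ∃ M : Γ.Subgraph, M.verts = s ∧ M.IsMatching := by
  refine ⟨{ verts := s
            Adj := fun v w => v ∈ s ∧ w = f v
            adj_sub := by rintro v _ ⟨hv, rfl⟩; exact hadj v hv
            edge_vert := fun h => h.1
            symm := ⟨by rintro v _ ⟨hv, rfl⟩; exact ⟨hmaps hv, (hinv v hv).symm⟩⟩ },
    rfl, fun v hv => ⟨f v, ⟨hv, rfl⟩, fun _ h => h.2⟩⟩

theorem hasPerfectMatching_of_involutive (f : V → V) (hf : Function.Involutive f)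
    (hadj : ∀ v, Γ.Adj v (f v)) : hasPerfectMatching Γ := by
  obtain ⟨M, hMV, hM⟩ := exists_isMatching_of_involutive_on (s := Set.univ) f
    (Set.mapsTo_univ f _) (fun v _ => hf v) (fun v _ => hadj v)
  exact ⟨M, hM, fun v => hMV ▸ Set.mem_univ v⟩

theorem Subgraph.IsMatching.even_ncard [Finite V] {M : Γ.Subgraph} (hM : M.IsMatching) :
    Even M.verts.ncard := by
  classical
  have := Fintype.ofFinite M.verts
  rw [Set.ncard_eq_toFinset_card']
  exact hM.even_card

theorem Subgraph.IsPerfectMatching.exists_adj_notMem_of_odd [Finite V] {M : Γ.Subgraph}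
    (hM : M.IsPerfectMatching) {s : Set V} (hs : Odd s.ncard) :
    ∃ v ∈ s, ∃ w ∉ s, M.Adj v w := by
  by_contra! h
  have hMs : (M.induce s).IsMatching := by
    intro v hv
    obtain ⟨w, hvw, huniq⟩ := hM.1 (hM.2 v)
    exact ⟨w, ⟨hv, h v hv w |>.mtr hvw, hvw⟩, fun w' hw' => huniq w' hw'.2.2⟩
  exact Nat.not_even_iff_odd.mpr hs hMs.even_ncard

end SimpleGraph

variable {G : Type*} [Group G]

theorem powerGraph_adj_iff [Finite G] {x y : G} :
    (powerGraph G).Adj x y ↔ x ≠ y ∧ (x ∈ zpowers y ∨ y ∈ zpowers x) := by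
  show (_ ∧ _) ↔ _
  rw [← Submonoid.mem_powers_iff, ← Submonoid.mem_powers_iff, mem_powers_iff_mem_zpowers,
    mem_powers_iff_mem_zpowers]

theorem powerGraph_adj_inv [Finite G] {x : G} (hx : x ≠ x⁻¹) : (powerGraph G).Adj x x⁻¹ :=
  powerGraph_adj_iff.mpr ⟨hx, .inr (inv_mem (mem_zpowers x))⟩

structure IsUniqueInvolution (z : G) : Prop where
  orderOf_eq_two : orderOf z = 2
  eq_of_orderOf_eq_two : ∀ ⦃x : G⦄, orderOf x = 2 → x = z

namespace IsUniqueInvolution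

variable {z : G}

theorem ne_one (hz : IsUniqueInvolution z) : z ≠ 1 := by
  intro h
  simpa [h] using hz.orderOf_eq_two

theorem sq_eq_one_iff (hz : IsUniqueInvolution z) {x : G} : x ^ 2 = 1 ↔ x = 1 ∨ x = z := by
  refine ⟨fun hx => or_iff_not_imp_left.mpr fun hx1 => hz.eq_of_orderOf_eq_two ?_, ?_⟩
  · exact orderOf_eq_prime hx hx1
  · rintro (rfl | rfl)
    · exact one_pow 2
    · rw [← hz.orderOf_eq_two, pow_orderOf_eq_one]

theorem commute (hz : IsUniqueInvolution z) (g : G) : Commute g z := by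
  have : g * z * g⁻¹ = z :=
    hz.eq_of_orderOf_eq_two ((SemiconjBy.orderOf_eq g (by simp [SemiconjBy])).symm.trans
      hz.orderOf_eq_two)
  simpa [Commute, SemiconjBy, mul_inv_eq_iff_eq_mul] using this

theorem map {H : Type*} [Group H] (hz : IsUniqueInvolution z) (e : G ≃* H) :
    IsUniqueInvolution (e z) where
  orderOf_eq_two := by rw [MulEquiv.orderOf_eq, hz.orderOf_eq_two]
  eq_of_orderOf_eq_two x hx := by
    rw [← e.apply_symm_apply x,
      hz.eq_of_orderOf_eq_two (x := e.symm x) (by rwa [MulEquiv.orderOf_eq])]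

end IsUniqueInvolution

theorem eq_of_mem_zpowers_of_orderOf_eq_two [Finite G] {x c d : G} (hc : c ∈ zpowers x)
    (hd : d ∈ zpowers x) (hc2 : orderOf c = 2) (hd2 : orderOf d = 2) : c = d := by
  classical
  have := Fintype.ofFinite (zpowers x)
  have h2 : 2 ∣ Fintype.card (zpowers x) := by
    rw [← hc2, ← Subgroup.orderOf_mk c hc, ← Nat.card_eq_fintype_card]
    exact orderOf_dvd_natCard _
  have hcard := IsCyclic.card_orderOf_eq_totient h2
  rw [Nat.totient_two, Finset.card_eq_one] at hcard
  obtain ⟨u, hu⟩ := hcard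
  have hmem : ∀ y (hy : y ∈ zpowers x), orderOf y = 2 → (⟨y, hy⟩ : zpowers x) = u := by
    intro y hy hy2
    simpa [hu, Subgroup.orderOf_mk] using
      (Finset.ext_iff.mp hu ⟨y, hy⟩).mp (by simp [Subgroup.orderOf_mk, hy2])
  exact congrArg Subtype.val ((hmem c hc hc2).trans (hmem d hd hd2).symm)

theorem hasPerfectMatching_powerGraph [Finite G] {z : G} (hz : IsUniqueInvolution z) :
    hasPerfectMatching (powerGraph G) := by
  classical
  have hzinv : z⁻¹ = z := by
    rw [inv_eq_iff_mul_eq_one, ← sq, hz.sq_eq_one_iff]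
    exact .inr rfl
  have hinv : ∀ x : G, x ≠ 1 → x ≠ z → x⁻¹ ≠ 1 ∧ x⁻¹ ≠ z ∧ x ≠ x⁻¹ := by
    intro x hx1 hxz
    refine ⟨inv_ne_one.mpr hx1, fun h => hxz (by rw [← inv_inv x, h, hzinv]), fun h => ?_⟩
    rcases hz.sq_eq_one_iff.mp (by rw [sq, mul_eq_one_iff_eq_inv]; exact h) with h | h
    exacts [hx1 h, hxz h]
  have hadj1z : (powerGraph G).Adj 1 z :=
    powerGraph_adj_iff.mpr ⟨hz.ne_one.symm, .inl (one_mem _)⟩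
  refine hasPerfectMatching_of_involutive
    (fun x => if x = 1 then z else if x = z then 1 else x⁻¹) (fun x => ?_) (fun x => ?_)
  · by_cases hx1 : x = 1
    · simp [hx1, hz.ne_one]
    by_cases hxz : x = z
    · simp [hxz, hz.ne_one]
    obtain ⟨h1, hz', -⟩ := hinv x hx1 hxz
    simp [hx1, hxz, h1, hz']
  · by_cases hx1 : x = 1
    · simpa [hx1] using hadj1z
    by_cases hxz : x = z
    · simpa [hxz, hz.ne_one] using hadj1z.symm
    simpa [hx1, hxz] using powerGraph_adj_inv (hinv x hx1 hxz).2.2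

theorem odd_ncard_setOf_mem_zpowers [Finite G] {c : G} (hc : orderOf c = 2) :
    Odd {x : G | x ≠ 1 ∧ c ∈ zpowers x}.ncard := by
  set S := {x : G | x ≠ 1 ∧ c ∈ zpowers x}
  have hc1 : c ≠ 1 := by
    rintro rfl
    simp at hc
  have hcS : c ∈ S := ⟨hc1, mem_zpowers c⟩
  have hcinv : c⁻¹ = c := by
    rw [inv_eq_iff_mul_eq_one, ← sq, ← hc, pow_orderOf_eq_one]
  have hmaps : Set.MapsTo (·⁻¹) (S \ {c}) (S \ {c}) := by
    rintro x ⟨⟨hx1, hcx⟩, hxc⟩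
    refine ⟨⟨inv_ne_one.mpr hx1, by rwa [zpowers_inv]⟩, fun h => hxc ?_⟩
    simp only [Set.mem_singleton_iff] at h ⊢
    rw [← inv_inv x, h, hcinv]
  have hne : ∀ x ∈ S \ {c}, x ≠ x⁻¹ := by
    rintro x ⟨⟨hx1, hcx⟩, hxc⟩ hx
    have hx2 : orderOf x = 2 :=
      orderOf_eq_prime (by rw [sq, mul_eq_one_iff_eq_inv]; exact hx) hx1
    exact hxc (eq_of_mem_zpowers_of_orderOf_eq_two (mem_zpowers x) hcx hx2 hc)
  obtain ⟨M, hMS, hM⟩ := exists_isMatching_of_involutive_on (Γ := powerGraph G) _ hmaps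
    (fun x _ => inv_inv x) (fun x hx => powerGraph_adj_inv (hne x hx))
  rw [← Set.ncard_sdiff_singleton_add_one hcS, ← hMS]
  exact hM.even_ncard.add_one

theorem IsPGroup.exists_mem_zpowers_orderOf_eq [Finite G] {p : ℕ} [Fact p.Prime]
    (hG : IsPGroup p G) {y : G} (hy : y ≠ 1) : ∃ d ∈ zpowers y, orderOf d = p := by
  obtain ⟨k, hk⟩ := IsPGroup.iff_orderOf.mp hG y
  have hk0 : k ≠ 0 := by
    rintro rfl
    exact hy (orderOf_eq_one_iff.mp (by simpa using hk))
  refine ⟨y ^ (orderOf y / p), pow_mem (mem_zpowers y) _,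
    orderOf_pow_orderOf_div (orderOf_pos y).ne' ?_⟩
  rw [hk]
  exact dvd_pow_self p hk0

theorem IsPGroup.mem_zpowers_of_orderOf_eq_two [Finite G] (hG : IsPGroup 2 G) {x y c : G}
    (hc : orderOf c = 2) (hcx : c ∈ zpowers x) (hyx : y ∈ zpowers x) (hy : y ≠ 1) :
    c ∈ zpowers y := by
  obtain ⟨d, hdy, hd⟩ := hG.exists_mem_zpowers_orderOf_eq hy
  rwa [eq_of_mem_zpowers_of_orderOf_eq_two hcx (zpowers_le.mpr hyx hdy) hc hd]

theorem exists_isUniqueInvolution_of_hasPerfectMatching [Finite G] (hG : IsPGroup 2 G)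
    (h2 : 2 ∣ Nat.card G) (hM : hasPerfectMatching (powerGraph G)) :
    ∃ z : G, IsUniqueInvolution z := by
  obtain ⟨M, hM⟩ := hM
  have partner : ∀ c : G, orderOf c = 2 → ∃ p, M.Adj 1 p ∧ c ∈ zpowers p := by
    intro c hc
    obtain ⟨v, ⟨-, hcv⟩, w, hw, hvw⟩ :=
      hM.exists_adj_notMem_of_odd (odd_ncard_setOf_mem_zpowers hc)
    obtain rfl : w = 1 := by
      by_contra hw1
      refine hw ⟨hw1, ?_⟩
      rcases (powerGraph_adj_iff.mp (M.adj_sub hvw)).2 with hvw' | hwv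
      · exact zpowers_le.mpr hvw' hcv
      · exact hG.mem_zpowers_of_orderOf_eq_two hc hcv hwv hw1
    exact ⟨v, hvw.symm, hcv⟩
  obtain ⟨z, hz⟩ := exists_prime_orderOf_dvd_card' 2 h2
  obtain ⟨p, h1p, hzp⟩ := partner z hz
  refine ⟨z, hz, fun c hc => ?_⟩
  obtain ⟨q, h1q, hcq⟩ := partner c hc
  rw [hM.1.eq_of_adj_left h1q h1p] at hcq
  exact eq_of_mem_zpowers_of_orderOf_eq_two hcq hzp hc hz

theorem hasPerfectMatching_powerGraph_iff [Finite G] (hG : IsPGroup 2 G) (h2 : 2 ∣ Nat.card G) :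
    hasPerfectMatching (powerGraph G) ↔ ∃ z : G, IsUniqueInvolution z :=
  ⟨exists_isUniqueInvolution_of_hasPerfectMatching hG h2,
    fun ⟨_, hz⟩ => hasPerfectMatching_powerGraph hz⟩

section Abelian

open Finset

variable {A : Type*} [CommGroup A]

theorem card_pow_two_pow_eq_one_le [Fintype A] [DecidableEq A] {z : A}
    (hz : ∀ x : A, x ^ 2 = 1 → x = 1 ∨ x = z) (k : ℕ) : #{x : A | x ^ 2 ^ k = 1} ≤ 2 ^ k := by
  induction k with
  | zero => simp [Finset.card_le_one]
  | succ k ih =>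
    set s : Finset A := {x | x ^ 2 ^ (k + 1) = 1}
    have hfiber : ∀ b ∈ s.image (· ^ 2), #{x ∈ s | x ^ 2 = b} ≤ 2 := by
      intro b hb
      obtain ⟨y, -, rfl⟩ := mem_image.mp hb
      refine (card_le_card (t := {y, z * y}) fun x hx => ?_).trans card_le_two
      have hxy : (x * y⁻¹) ^ 2 = 1 := by
        rw [mul_pow, (mem_filter.mp hx).2, inv_pow, mul_inv_cancel]
      rcases hz _ hxy with h | h
      · simp [mul_inv_eq_one.mp h]
      · simp [mul_inv_eq_iff_eq_mul.mp h]
    have himage : s.image (· ^ 2) ⊆ ({x | x ^ 2 ^ k = 1} : Finset A) := by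
      intro b hb
      obtain ⟨y, hy, rfl⟩ := mem_image.mp hb
      simpa [s, ← pow_mul, ← pow_succ'] using hy
    calc #s ≤ 2 * #(s.image (· ^ 2)) := card_le_mul_card_image s 2 hfiber
      _ ≤ 2 * 2 ^ k := by grw [card_le_card himage, ih]
      _ = 2 ^ (k + 1) := (pow_succ' 2 k).symm

theorem isCyclic_of_sq_eq_one [Finite A] (hA : IsPGroup 2 A) {z : A}
    (hz : ∀ x : A, x ^ 2 = 1 → x = 1 ∨ x = z) : IsCyclic A := by
  classical
  have := Fintype.ofFinite A
  obtain ⟨n, hn⟩ := IsPGroup.iff_card.mp hA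
  obtain ⟨k, -, hk⟩ :=
    (Nat.dvd_prime_pow Nat.prime_two).mp (hn ▸ Group.exponent_dvd_nat_card (G := A))
  refine IsCyclic.of_exponent_eq_card (le_antisymm
    (Nat.le_of_dvd Nat.card_pos Group.exponent_dvd_nat_card) ?_)
  calc Nat.card A = #{x : A | x ^ 2 ^ k = 1} := by
        simp [← hk, Monoid.pow_exponent_eq_one, Nat.card_eq_fintype_card]
    _ ≤ 2 ^ k := card_pow_two_pow_eq_one_le hz k
    _ = Monoid.exponent A := hk.symm

end Abelian

theorem IsPGroup.exists_ne_one_mem_center_of_normal [Finite G] {p : ℕ} [Fact p.Prime]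
    (hG : IsPGroup p G) {N : Subgroup G} [N.Normal] (hN : N ≠ ⊥) :
    ∃ g ∈ N, g ≠ 1 ∧ g ∈ center G := by
  have hpN : p ∣ Nat.card N :=
    ((hG.to_subgroup N).card_eq_or_dvd).resolve_left (mt Subgroup.card_eq_one.mp hN)
  obtain ⟨b, hb, hb1⟩ :=
    (hG.of_equiv ConjAct.toConjAct).exists_fixed_point_of_prime_dvd_card_of_fixed_point
      N hpN (a := 1) (MulAction.mem_fixedPoints.mpr fun g => smul_one g)
  refine ⟨b, b.2, fun h => hb1 (Subtype.ext h.symm), mem_center_iff.mpr fun g => ?_⟩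
  have hgb := congrArg Subtype.val (MulAction.mem_fixedPoints.mp hb (ConjAct.toConjAct g))
  rw [ConjAct.Subgroup.val_conj_smul, ConjAct.toConjAct_smul] at hgb
  exact mul_inv_eq_iff_eq_mul.mp hgb

theorem IsPGroup.exists_normal_isMulCommutative_centralizer_le [Finite G] {p : ℕ} [Fact p.Prime]
    (hG : IsPGroup p G) :
    ∃ A : Subgroup G, A.Normal ∧ IsMulCommutative A ∧ centralizer (A : Set G) ≤ A := by
  obtain ⟨A, ⟨hAn, hAc⟩, hAmax⟩ :=
    (Set.toFinite {A : Subgroup G | A.Normal ∧ IsMulCommutative A}).exists_maximal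
      ⟨⊥, inferInstance, inferInstance⟩
  refine ⟨A, hAn, hAc, fun c hc => ?_⟩
  by_contra hcA
  set π := QuotientGroup.mk' A
  have hne : (centralizer (A : Set G)).map π ≠ ⊥ := by
    refine (Subgroup.ne_bot_iff_exists_ne_one).mpr ⟨⟨π c, mem_map_of_mem π hc⟩, ?_⟩
    simpa [π, Subtype.ext_iff] using hcA
  obtain ⟨-, ⟨c₀, hc₀, rfl⟩, hq1, hqZ⟩ :=
    (hG.to_quotient A).exists_ne_one_mem_center_of_normal hne
  set B := (zpowers (π c₀)).comap π
  have hBn : B.Normal := by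
    refine Subgroup.Normal.comap ⟨fun n hn g => ?_⟩ π
    have hn' : n ∈ Subgroup.center (G ⧸ A) := zpowers_le.mpr hqZ hn
    rwa [mem_center_iff.mp hn' g, mul_inv_cancel_right]
  have hB : ∀ b ∈ B, ∃ k : ℤ, ∃ y ∈ A, b = c₀ ^ k * y := by
    intro b hb
    obtain ⟨k, hk⟩ := mem_zpowers_iff.mp (mem_comap.mp hb)
    refine ⟨k, (c₀ ^ k)⁻¹ * b, QuotientGroup.eq.mp ?_, by group⟩
    simpa [π] using hk
  have hBc : IsMulCommutative B := by
    refine IsMulCommutative.of_setLike_mul_comm fun b₁ hb₁ b₂ hb₂ => ?_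
    obtain ⟨k₁, y₁, hy₁, rfl⟩ := hB b₁ hb₁
    obtain ⟨k₂, y₂, hy₂, rfl⟩ := hB b₂ hb₂
    have hcy : ∀ y ∈ A, Commute c₀ y := fun y hy => (mem_centralizer_iff.mp hc₀ y hy).symm
    refine Commute.mul_left (.mul_right (.zpow_zpow_self c₀ k₁ k₂) ((hcy y₂ hy₂).zpow_left k₁))
      (.mul_right ((hcy y₁ hy₁).zpow_left k₂).symm (setLike_mul_comm hy₁ hy₂))
  have hAB : A ≤ B := fun a ha => mem_comap.mpr (by
    rw [show π a = 1 from (QuotientGroup.eq_one_iff a).mpr ha]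
    exact one_mem _)
  have hc₀B : c₀ ∈ B := mem_comap.mpr (mem_zpowers _)
  exact hq1 ((QuotientGroup.eq_one_iff c₀).mpr (hAmax ⟨hBn, hBc⟩ hAB hc₀B))

namespace Int

theorem exists_two_pow_dvd_add_mul_of_odd {o : ℤ} (ho : Odd o) (k : ℕ) (s : ℤ) :
    ∃ j : ℤ, 2 ^ k ∣ s + j * o := by
  obtain ⟨u, v, huv⟩ := (isCoprime_two_left.mpr ho).pow_left (m := k)
  exact ⟨-s * v, s * u, by linear_combination (-s) * huv⟩

theorem two_pow_dvd_of_dvd_mul_odd {o t : ℤ} (ho : Odd o) {k : ℕ} (h : 2 ^ k ∣ o * t) :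
    2 ^ k ∣ t :=
  ((isCoprime_two_left.mpr ho).pow_left).dvd_of_dvd_mul_left h

theorem not_four_dvd_mul_self_add_one (s : ℤ) : ¬ 4 ∣ s * s + 1 := by
  intro h
  have key : ∀ u : ZMod 4, u * u + 1 ≠ 0 := by decide
  exact key s (by exact_mod_cast (ZMod.intCast_zmod_eq_zero_iff_dvd _ 4).mpr h)

/-- The arithmetic of `IsUniqueInvolution.sq_eq_of_notMem_zpowers`, where `x * a * x⁻¹ = a ^ r`,
`x ^ 2 = a ^ t` and `a` has order `2 ^ (m + 1)`: `x` commutes with `x ^ 2` but not with `a`, and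
no `x * a ^ j` is an involution. -/
theorem two_pow_dvd_of_forall_not_dvd {m : ℕ} {r t : ℤ} (hfix : 2 ^ (m + 1) ∣ t * (r - 1))
    (hr : ¬ 2 ^ (m + 1) ∣ r - 1) (hsq : ∀ j : ℤ, ¬ 2 ^ (m + 1) ∣ t + j * (r + 1)) :
    2 ^ m ∣ t := by
  rcases Int.even_or_odd r with ⟨u, rfl⟩ | ⟨u, rfl⟩
  · obtain ⟨j, hj⟩ := exists_two_pow_dvd_add_mul_of_odd (o := u + u + 1) ⟨u, by ring⟩ (m + 1) t
    exact absurd hj (hsq j)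
  rcases Int.even_or_odd u with ⟨v, rfl⟩ | ⟨v, rfl⟩
  · rcases Int.even_or_odd t with ⟨s, rfl⟩ | ht
    · obtain ⟨j, hj⟩ := exists_two_pow_dvd_add_mul_of_odd (o := 2 * v + 1) ⟨v, rfl⟩ m s
      refine absurd ?_ (hsq j)
      rw [show s + s + j * (2 * (v + v) + 1 + 1) = 2 * (s + j * (2 * v + 1)) by ring, pow_succ']
      exact mul_dvd_mul_left 2 hj
    · exact absurd (two_pow_dvd_of_dvd_mul_odd ht hfix) hr
  · rw [show t * (2 * (2 * v + 1) + 1 - 1) = 2 * ((2 * v + 1) * t) by ring, pow_succ',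
      mul_dvd_mul_iff_left two_ne_zero] at hfix
    exact two_pow_dvd_of_dvd_mul_odd ⟨v, rfl⟩ hfix

end Int

section NormalSelfCentralizing

variable {z a : G} {m : ℕ}

theorem IsUniqueInvolution.sq_ne_one_of_notMem_zpowers (hz : IsUniqueInvolution z)
    (hcent : ∀ g : G, Commute g a → g ∈ zpowers a) {y : G} (hy : y ∉ zpowers a) : y ^ 2 ≠ 1 := by
  intro h
  rcases hz.sq_eq_one_iff.mp h with rfl | rfl
  · exact hy (one_mem _)
  · exact hy (hcent _ (hz.commute a).symm)

theorem IsUniqueInvolution.sq_eq_of_notMem_zpowers (hz : IsUniqueInvolution z)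
    (ha : orderOf a = 2 ^ (m + 1)) (hnorm : ∀ g : G, g * a * g⁻¹ ∈ zpowers a)
    (hcent : ∀ g : G, Commute g a → g ∈ zpowers a) {x : G} (hx : x ∉ zpowers a)
    (hx2 : x ^ 2 ∈ zpowers a) : x ^ 2 = z := by
  have hdvd : ∀ k : ℤ, a ^ k = 1 ↔ (2 : ℤ) ^ (m + 1) ∣ k := fun k => by
    rw [← orderOf_dvd_iff_zpow_eq_one, ha]
    push_cast
    rfl
  obtain ⟨r, hr⟩ := mem_zpowers_iff.mp (hnorm x)
  obtain ⟨t, ht⟩ := mem_zpowers_iff.mp hx2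
  have hconj : ∀ j : ℤ, x * a ^ j * x⁻¹ = a ^ (r * j) := fun j => by rw [zpow_mul, hr, conj_zpow]
  have hsq : ∀ j : ℤ, ¬ 2 ^ (m + 1) ∣ t + j * (r + 1) := by
    intro j hj
    refine hz.sq_ne_one_of_notMem_zpowers hcent (y := x * a ^ j)
      (fun h => hx (by simpa using mul_mem h (zpow_mem (mem_zpowers a) (-j)))) ?_
    calc (x * a ^ j) ^ 2 = (x * a ^ j * x⁻¹) * x ^ 2 * a ^ j := by rw [sq, sq]; group
      _ = a ^ (t + j * (r + 1)) := by
        rw [hconj, ← ht, ← zpow_add, ← zpow_add]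
        ring_nf
      _ = 1 := (hdvd _).mpr hj
  have hfix : 2 ^ (m + 1) ∣ t * (r - 1) := by
    refine (hdvd _).mp ?_
    have : x * a ^ t * x⁻¹ = a ^ t := by
      rw [ht, ← pow_succ', pow_succ, mul_inv_cancel_right]
    rw [mul_sub, mul_one, zpow_sub, mul_comm, ← hconj, this, mul_inv_cancel]
  have hr1 : ¬ 2 ^ (m + 1) ∣ r - 1 := by
    intro h
    refine hx (hcent x ?_)
    have : x * a * x⁻¹ = a := by
      rw [← hr, ← mul_inv_eq_one, ← zpow_sub_one, (hdvd _).mpr h]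
    exact mul_inv_eq_iff_eq_mul.mp this
  obtain ⟨w, rfl⟩ := Int.two_pow_dvd_of_forall_not_dvd hfix hr1 hsq
  refine (hz.sq_eq_one_iff.mp ?_).resolve_left (by simpa [← ht] using mt (hdvd _).mp (hsq 0))
  rw [← ht, ← zpow_natCast, ← zpow_mul, hdvd]
  exact ⟨w, by push_cast; ring⟩

theorem IsUniqueInvolution.conj_eq_inv_of_notMem_zpowers (hz : IsUniqueInvolution z)
    (ha : orderOf a = 2 ^ (m + 1)) (hnorm : ∀ g : G, g * a * g⁻¹ ∈ zpowers a)
    (hcent : ∀ g : G, Commute g a → g ∈ zpowers a) {x : G} (hx : x ∉ zpowers a)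
    (hx2 : x ^ 2 ∈ zpowers a) : x * a * x⁻¹ = a⁻¹ := by
  have hxa2 : (x * a) ^ 2 = (x * a * x⁻¹) * x ^ 2 * a := by rw [sq, sq]; group
  have hxa : (x * a) ^ 2 = z :=
    hz.sq_eq_of_notMem_zpowers ha hnorm hcent
      (fun h => hx (by simpa using mul_mem h (inv_mem (mem_zpowers a))))
      (hxa2 ▸ mul_mem (mul_mem (hnorm x) hx2) (mem_zpowers a))
  rw [hxa2, hz.sq_eq_of_notMem_zpowers ha hnorm hcent hx hx2, mul_assoc _ z,
    ← (hz.commute a).eq, ← mul_assoc, mul_eq_right] at hxa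
  exact eq_inv_of_mul_eq_one_left hxa

theorem IsUniqueInvolution.sq_mem_zpowers_of_pow_four_mem (hz : IsUniqueInvolution z)
    (ha : orderOf a = 2 ^ (m + 1)) (hm : 1 ≤ m) (hnorm : ∀ g : G, g * a * g⁻¹ ∈ zpowers a)
    (hcent : ∀ g : G, Commute g a → g ∈ zpowers a) {y : G} (hy : y ^ 4 ∈ zpowers a) :
    y ^ 2 ∈ zpowers a := by
  by_contra hy2
  have hinv := hz.conj_eq_inv_of_notMem_zpowers ha hnorm hcent hy2 (by rwa [← pow_mul])
  obtain ⟨s, hs⟩ := mem_zpowers_iff.mp (hnorm y)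
  -- conjugation by `y` would be a square root of inversion on `a`
  have hs2 : a ^ (s * s + 1) = 1 := by
    rw [zpow_add_one, zpow_mul, hs, conj_zpow, hs,
      show y * (y * a * y⁻¹) * y⁻¹ = y ^ 2 * a * (y ^ 2)⁻¹ by rw [sq]; group, hinv,
      inv_mul_cancel]
  have h4 : (4 : ℤ) ∣ 2 ^ (m + 1) := by
    simpa using pow_dvd_pow (2 : ℤ) (show 2 ≤ m + 1 by omega)
  refine Int.not_four_dvd_mul_self_add_one s (h4.trans ?_)
  have := orderOf_dvd_iff_zpow_eq_one.mpr hs2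
  rwa [ha, Nat.cast_pow, Nat.cast_ofNat] at this

theorem IsUniqueInvolution.sq_mem_zpowers (hz : IsUniqueInvolution z) (hG : IsPGroup 2 G)
    (ha : orderOf a = 2 ^ (m + 1)) (hm : 1 ≤ m) (hnorm : ∀ g : G, g * a * g⁻¹ ∈ zpowers a)
    (hcent : ∀ g : G, Commute g a → g ∈ zpowers a) (x : G) : x ^ 2 ∈ zpowers a := by
  obtain ⟨k, hk⟩ := IsPGroup.iff_orderOf.mp hG x
  suffices ∀ k : ℕ, x ^ 2 ^ (k + 1) ∈ zpowers a → x ^ 2 ∈ zpowers a from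
    this k (by rw [pow_succ, pow_mul, ← hk, pow_orderOf_eq_one, one_pow]; exact one_mem _)
  intro k
  induction k with
  | zero => simp
  | succ k ih =>
    intro h
    have := hz.sq_mem_zpowers_of_pow_four_mem ha hm hnorm hcent (y := x ^ 2 ^ k)
      (by rwa [← pow_mul, show 2 ^ k * 4 = 2 ^ (k + 1 + 1) by ring])
    exact ih (by rwa [← pow_mul, ← pow_succ] at this)

theorem IsUniqueInvolution.index_zpowers_eq_two (hz : IsUniqueInvolution z) (hG : IsPGroup 2 G)
    (ha : orderOf a = 2 ^ (m + 1)) (hm : 1 ≤ m) (hnorm : ∀ g : G, g * a * g⁻¹ ∈ zpowers a)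
    (hcent : ∀ g : G, Commute g a → g ∈ zpowers a) (htop : zpowers a ≠ ⊤) :
    (zpowers a).index = 2 := by
  have hinv : ∀ x ∉ zpowers a, x * a * x⁻¹ = a⁻¹ := fun x hx =>
    hz.conj_eq_inv_of_notMem_zpowers ha hnorm hcent hx (hz.sq_mem_zpowers hG ha hm hnorm hcent x)
  obtain ⟨x, hx⟩ : ∃ x, x ∉ zpowers a := by
    by_contra! h
    exact htop ((eq_top_iff' _).mpr h)
  refine index_eq_two_iff.mpr ⟨x, fun b => ?_⟩
  by_cases hb : b ∈ zpowers a
  · exact .inr ⟨hb, fun h => hx (by simpa using mul_mem (inv_mem hb) h)⟩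
  · refine .inl ⟨hcent _ (mul_inv_eq_iff_eq_mul.mp ?_), hb⟩
    calc b * x * a * (b * x)⁻¹ = b * (x * a * x⁻¹) * b⁻¹ := by group
      _ = (b * a * b⁻¹)⁻¹ := by rw [hinv x hx]; group
      _ = a := by rw [hinv b hb, inv_inv]

end NormalSelfCentralizing

namespace QuaternionGroup

theorem isUniqueInvolution (n : ℕ) [NeZero n] : IsUniqueInvolution (a n : QuaternionGroup n) := by
  have hmem : ∀ k : ℕ, (a k : QuaternionGroup n) ∈ zpowers (a 1) := fun k =>
    a_one_pow (n := n) k ▸ pow_mem (mem_zpowers _) k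
  have h2 : orderOf (a n : QuaternionGroup n) = 2 := by
    rw [orderOf_a, ZMod.val_natCast, Nat.mod_eq_of_lt (by have := NeZero.pos n; omega),
      Nat.gcd_mul_left_left, Nat.mul_div_cancel _ (NeZero.pos n)]
  refine ⟨h2, fun x hx => ?_⟩
  cases x with
  | a i => exact eq_of_mem_zpowers_of_orderOf_eq_two (by simpa using hmem i.val) (hmem n) hx h2
  | xa i => simp [orderOf_xa] at hx

variable {n : ℕ} [NeZero n]

def liftOfRelations (a x : G) (ha : a ^ (2 * n) = 1) (hxa : x * a * x⁻¹ = a⁻¹)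
    (hx2 : x ^ 2 = a ^ n) : QuaternionGroup n →* G :=
  MonoidHom.mk' (fun | .a i => a ^ i.val | .xa i => x * a ^ i.val) <| by
    have hadd : ∀ i j : ZMod (2 * n), a ^ (i + j).val = a ^ i.val * a ^ j.val := fun i j => by
      rw [ZMod.val_add, ← pow_eq_pow_mod _ ha, pow_add]
    have hsub : ∀ i j : ZMod (2 * n), a ^ (j - i).val = (a ^ i.val)⁻¹ * a ^ j.val :=
      fun i j => by rw [eq_inv_mul_iff_mul_eq, ← hadd, add_sub_cancel]
    have hxa' : x⁻¹ * a * x⁻¹⁻¹ = a⁻¹ :=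
      calc x⁻¹ * a * x⁻¹⁻¹ = x⁻¹ * (a⁻¹)⁻¹ * x := by group
        _ = x⁻¹ * (x * a * x⁻¹)⁻¹ * x := by rw [hxa]
        _ = a⁻¹ := by group
    have hpow_mul : ∀ k : ℕ, a ^ k * x = x * (a ^ k)⁻¹ := fun k => by
      rw [← inv_pow, ← hxa', conj_pow]
      group
    have hn : a ^ (n : ZMod (2 * n)).val = x ^ 2 := by
      rw [hx2, ZMod.val_natCast, Nat.mod_eq_of_lt (by have := NeZero.pos n; omega)]
    rintro (i | i) (j | j)
    · simp only [a_mul_a, hadd]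
    · simp only [a_mul_xa, hsub, ← mul_assoc, hpow_mul]
    · simp only [xa_mul_a, hadd, mul_assoc]
    · simp only [xa_mul_xa, add_sub_assoc, hadd, hsub, hn]
      rw [sq, mul_assoc x (a ^ i.val), ← mul_assoc (a ^ i.val), hpow_mul]
      group

theorem liftOfRelations_injective {a x : G} (ha : orderOf a = 2 * n) (hx : x ∉ zpowers a)
    (hxa : x * a * x⁻¹ = a⁻¹) (hx2 : x ^ 2 = a ^ n) :
    Function.Injective (liftOfRelations a x (ha ▸ pow_orderOf_eq_one a) hxa hx2) := by
  have hval : ∀ i j : ZMod (2 * n), a ^ i.val = a ^ j.val → i = j := fun i j h =>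
    ZMod.val_injective _ (pow_injOn_Iio_orderOf (by simpa [ha] using i.val_lt)
      (by simpa [ha] using j.val_lt) h)
  have hax : ∀ i j : ZMod (2 * n), a ^ i.val ≠ x * a ^ j.val := fun i j h => by
    refine hx ((eq_mul_inv_of_mul_eq h.symm).symm ▸ mul_mem ?_ (inv_mem ?_)) <;>
      exact pow_mem (mem_zpowers a) _
  rintro (i | i) (j | j) h
  · rw [hval i j h]
  · exact absurd h (hax i j)
  · exact absurd h.symm (hax j i)
  · rw [hval i j (mul_left_cancel h)]

end QuaternionGroup

theorem nonempty_mulEquiv_quaternionGroup [Finite G] {n : ℕ} [NeZero n] {a x : G}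
    (ha : orderOf a = 2 * n) (hx : x ∉ zpowers a) (hxa : x * a * x⁻¹ = a⁻¹) (hx2 : x ^ 2 = a ^ n)
    (hcard : Nat.card G = 4 * n) : Nonempty (G ≃* QuaternionGroup n) := by
  have hbij := (QuaternionGroup.liftOfRelations_injective ha hx hxa hx2).bijective_of_nat_card_le
    (by rw [hcard, Nat.card_eq_fintype_card, QuaternionGroup.card])
  exact ⟨(MulEquiv.ofBijective _ hbij).symm⟩

theorem IsCyclic.exists_isUniqueInvolution [Finite G] [IsCyclic G] (h2 : 2 ∣ Nat.card G) :
    ∃ z : G, IsUniqueInvolution z := by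
  obtain ⟨g, hg⟩ := IsCyclic.exists_generator (α := G)
  obtain ⟨z, hz⟩ := exists_prime_orderOf_dvd_card' 2 h2
  exact ⟨z, hz, fun x hx => eq_of_mem_zpowers_of_orderOf_eq_two (hg x) (hg z) hx hz⟩

theorem IsUniqueInvolution.isCyclic_or_nonempty_mulEquiv_quaternionGroup [Finite G]
    (hG : IsPGroup 2 G) {z : G} (hz : IsUniqueInvolution z) :
    IsCyclic G ∨ ∃ m : ℕ, Nonempty (G ≃* QuaternionGroup (2 ^ m)) := by
  obtain ⟨A, hAn, hAc, hAC⟩ := hG.exists_normal_isMulCommutative_centralizer_le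
  have hzA : z ∈ A := hAC (mem_centralizer_iff.mpr fun g _ => (hz.commute g).eq)
  have hAcyc : IsCyclic A := by
    open scoped IsMulCommutative in
    refine isCyclic_of_sq_eq_one (hG.to_subgroup A) (z := ⟨z, hzA⟩) fun x hx => ?_
    rcases hz.sq_eq_one_iff.mp (congrArg Subtype.val hx : (x : G) ^ 2 = 1) with h | h
    exacts [.inl (Subtype.ext h), .inr (Subtype.ext h)]
  obtain ⟨a, rfl⟩ := (A.isCyclic_iff_exists_zpowers_eq_top).mp hAcyc
  have hnorm : ∀ g : G, g * a * g⁻¹ ∈ zpowers a := fun g => hAn.conj_mem a (mem_zpowers a) g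
  have hcent : ∀ g : G, Commute g a → g ∈ zpowers a := fun g hg =>
    hAC (mem_centralizer_iff.mpr fun h hh => by
      obtain ⟨k, rfl⟩ := mem_zpowers_iff.mp hh
      exact (hg.zpow_right k).eq.symm)
  by_cases htop : zpowers a = ⊤
  · exact .inl (isCyclic_iff_exists_zpowers_eq_top.mpr ⟨a, htop⟩)
  have hnot_central : ¬ ∀ g : G, Commute g a := fun h =>
    htop ((eq_top_iff' _).mpr fun g => hcent g (h g))
  obtain ⟨k, hk⟩ := IsPGroup.iff_orderOf.mp hG a
  obtain _ | _ | m := k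
  · rw [pow_zero, orderOf_eq_one_iff] at hk
    exact absurd (fun g => hk ▸ Commute.one_right g) hnot_central
  · have haz : a = z := hz.eq_of_orderOf_eq_two (by simpa using hk)
    exact absurd (fun g => haz ▸ hz.commute g) hnot_central
  have ha : orderOf a = 2 ^ (m + 1 + 1) := hk
  obtain ⟨x, hx⟩ : ∃ x, x ∉ zpowers a := by
    by_contra! h
    exact htop ((eq_top_iff' _).mpr h)
  have hx2 := hz.sq_mem_zpowers hG ha (by omega) hnorm hcent x
  have hpow : a ^ 2 ^ (m + 1) = z := by
    refine hz.eq_of_orderOf_eq_two ?_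
    have := orderOf_pow_orderOf_div (x := a) (n := 2) (by rw [ha]; positivity)
      (by rw [ha]; exact dvd_pow_self 2 (by omega))
    rwa [ha, pow_succ, Nat.mul_div_cancel _ two_pos] at this
  refine .inr ⟨m + 1, nonempty_mulEquiv_quaternionGroup (by rw [ha, pow_succ']) hx
    (hz.conj_eq_inv_of_notMem_zpowers ha hnorm hcent hx hx2) ?_ ?_⟩
  · rw [hz.sq_eq_of_notMem_zpowers ha hnorm hcent hx hx2, hpow]
  · rw [← card_mul_index (zpowers a), hz.index_zpowers_eq_two hG ha (by omega) hnorm hcent htop,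
      Nat.card_zpowers, ha]
    ring

end

theorem stmt18 (G : Type*) [Group G] [Fintype G] (n : ℕ) (hn : 1 ≤ n)
    (h : Fintype.card G = 2 ^ n) :
    hasPerfectMatching (powerGraph G) ↔
      (IsCyclic G ∨ ∃ m : ℕ, Nonempty (G ≃* QuaternionGroup (2 ^ m))) := by
  have hcard : Nat.card G = 2 ^ n := by rw [Nat.card_eq_fintype_card, h]
  have hG : IsPGroup 2 G := IsPGroup.of_card hcard
  have h2 : 2 ∣ Nat.card G := hcard ▸ dvd_pow_self 2 (by omega)
  rw [hasPerfectMatching_powerGraph_iff hG h2]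
  constructor
  · rintro ⟨z, hz⟩
    exact hz.isCyclic_or_nonempty_mulEquiv_quaternionGroup hG
  · rintro (hcyc | ⟨m, ⟨e⟩⟩)
    · exact IsCyclic.exists_isUniqueInvolution h2
    · exact ⟨_, (QuaternionGroup.isUniqueInvolution (2 ^ m)).map e.symm⟩
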